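/- arXiv:1708.07469 — 2 statements merged into one kernel-verified Lean document; each statement's English description precedes it below -/
import Mathlib

section
/- Let f : [0,T] × ℝ^d → ℝ be three-times continuously differentiable in x with bounded third-order spatial derivatives, let σ : ℝ^d → ℝ^d be bounded, and let ρ be a d×d positive semidefinite matrix. If W_Δ is a centered Gaussian vector in ℝ^d with covariance Cov[(W_Δ)_i, (W_Δ)_j] = ρ_{ij} Δ, then |∑_{i,j=1}^d ρ_{ij} σ_i(x) σ_j(x) ∂²f/∂x_i∂x_j(t,x) − E[∑_{i=1}^d ((∂f/∂x_i)(t, x + σ(x)W_Δ) − (∂f/∂x_i)(t,x)) σ_i(x) W_Δ^i / Δ]| ≤ C(x) √Δ, where C(x) depends only on ρ, the bound on the third derivatives of f, and σ(x). -/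
open MeasureTheory ProbabilityTheory Filter
open Real
open scoped ENNReal NNReal Topology

/-- Partial derivative in spatial direction `i`. -/
noncomputable def pdx {d : ℕ} (i : Fin d) (g : (Fin d → ℝ) → ℝ) (x : Fin d → ℝ) : ℝ :=
  fderiv ℝ g x (Pi.single i 1)

lemma gauss01_eq : gaussianReal 0 1 = volume.withDensity (gaussianPDF 0 1) := if_neg one_ne_zero

lemma pdf01_eq : gaussianPDFReal 0 1 = fun x => (Real.sqrt (2*π))⁻¹ * rexp (-(2⁻¹) * x^2) := by
  funext x
  simp only [gaussianPDFReal, NNReal.coe_one, mul_one, sub_zero]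
  ring_nf

lemma integral_gauss01 {g : ℝ → ℝ} :
    ∫ x, g x ∂(gaussianReal 0 1) = ∫ x, gaussianPDFReal 0 1 x * g x := by
  rw [gauss01_eq]
  rw [show gaussianPDF 0 1 = fun x => ((gaussianPDFReal 0 1 x).toNNReal : ℝ≥0∞) from rfl]
  rw [integral_withDensity_eq_integral_smul (measurable_gaussianPDFReal 0 1).real_toNNReal g]
  congr 1
  funext x
  rw [NNReal.smul_def, smul_eq_mul, Real.coe_toNNReal _ (gaussianPDFReal_nonneg 0 1 x)]

lemma integrable_gauss01_iff {g : ℝ → ℝ} :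
    Integrable g (gaussianReal 0 1) ↔ Integrable (fun x => g x * gaussianPDFReal 0 1 x) := by
  rw [gauss01_eq]
  rw [integrable_withDensity_iff (measurable_gaussianPDF 0 1)
    (ae_of_all _ fun x => ENNReal.ofReal_lt_top)]
  simp_rw [gaussianPDF, ENNReal.toReal_ofReal (gaussianPDFReal_nonneg 0 1 _)]

lemma integral_comp_neg_real (g : ℝ → ℝ) : ∫ x : ℝ, g (-x) = ∫ x : ℝ, g x :=
  (Measure.measurePreserving_neg (volume : Measure ℝ)).integral_comp
    (Homeomorph.neg ℝ).measurableEmbedding g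

lemma pdf01_neg (x : ℝ) : gaussianPDFReal 0 1 (-x) = gaussianPDFReal 0 1 x := by
  rw [pdf01_eq]; simp

lemma integrable_pow_mul_pdf (n : ℕ) :
    Integrable (fun x : ℝ => |x| ^ n * gaussianPDFReal 0 1 x) := by
  rw [pdf01_eq]
  have h : Integrable (fun x : ℝ => x ^ n * rexp (-(2⁻¹) * x ^ 2)) := by
    have := integrable_rpow_mul_exp_neg_mul_sq (by norm_num : (0:ℝ) < 2⁻¹)
      (s := (n : ℝ)) (lt_of_lt_of_le neg_one_lt_zero (Nat.cast_nonneg n))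
    simpa [Real.rpow_natCast] using this
  have h2 : Integrable (fun x : ℝ => |x| ^ n * rexp (-(2⁻¹) * x ^ 2)) := by
    have := h.abs
    refine this.congr (ae_of_all _ fun x => ?_)
    simp only [abs_mul, abs_pow, abs_of_pos (Real.exp_pos _)]
  refine (h2.const_mul ((Real.sqrt (2*π))⁻¹)).congr (ae_of_all _ fun x => ?_)
  ring

lemma integrable_abs_pow_gauss01 (n : ℕ) :
    Integrable (fun x : ℝ => |x| ^ n) (gaussianReal 0 1) := by
  rw [integrable_gauss01_iff]
  exact integrable_pow_mul_pdf n

lemma integrable_id_gauss01 : Integrable (fun x : ℝ => x) (gaussianReal 0 1) := by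
  refine (integrable_abs_pow_gauss01 1).mono' measurable_id.aestronglyMeasurable
    (ae_of_all _ fun x => ?_)
  simp

lemma integrable_sq_gauss01 : Integrable (fun x : ℝ => x ^ 2) (gaussianReal 0 1) := by
  refine (integrable_abs_pow_gauss01 2).mono' (measurable_id.pow_const 2).aestronglyMeasurable
    (ae_of_all _ fun x => ?_)
  simp [abs_pow]

lemma integral_id_gauss01 : ∫ x, x ∂(gaussianReal 0 1) = 0 := by
  rw [integral_gauss01]
  have h := integral_comp_neg_real (fun x => gaussianPDFReal 0 1 x * x)
  simp only [pdf01_neg, mul_neg] at h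
  rw [integral_neg] at h
  linarith

lemma deriv_aux (x : ℝ) : HasDerivAt (fun y : ℝ => y * rexp (-(2⁻¹) * y ^ 2))
    ((1 - x ^ 2) * rexp (-(2⁻¹) * x ^ 2)) x := by
  have h1 : HasDerivAt (fun y : ℝ => -(2⁻¹) * y ^ 2) (-(2⁻¹) * (2 * x ^ 1)) x :=
    (hasDerivAt_pow 2 x).const_mul _
  have h3 := (hasDerivAt_id x).mul h1.exp
  refine h3.congr_deriv ?_
  simp only [id_eq, pow_one]
  ring

lemma int_exp_half : Integrable (fun x : ℝ => rexp (-(2⁻¹) * x ^ 2)) :=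
  integrable_exp_neg_mul_sq (by norm_num)

lemma int_sq_exp_half : Integrable (fun x : ℝ => x ^ 2 * rexp (-(2⁻¹) * x ^ 2)) := by
  have := integrable_rpow_mul_exp_neg_mul_sq (by norm_num : (0:ℝ) < 2⁻¹)
    (s := ((2:ℕ) : ℝ)) (by norm_num)
  simpa [Real.rpow_natCast] using this

lemma int_one_sub_sq_exp : Integrable (fun x : ℝ => (1 - x ^ 2) * rexp (-(2⁻¹) * x ^ 2)) := by
  refine (int_exp_half.sub int_sq_exp_half).congr (ae_of_all _ fun x => ?_)
  simp only [Pi.sub_apply]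
  ring

lemma tendsto_u_atTop : Tendsto (fun y : ℝ => y * rexp (-(2⁻¹) * y ^ 2)) atTop (𝓝 0) := by
  have h2 : Tendsto (fun x : ℝ => rexp (-(1/2) * x)) atTop (𝓝 0) := by
    have hm : Tendsto (fun x : ℝ => (1/2 : ℝ) * x) atTop atTop :=
      Tendsto.const_mul_atTop (by norm_num) tendsto_id
    have := tendsto_exp_neg_atTop_nhds_zero.comp hm
    refine this.congr fun x => ?_
    simp only [Function.comp]
    ring_nf
  have h := (rpow_mul_exp_neg_mul_sq_isLittleO_exp_neg (by norm_num : (0:ℝ) < 2⁻¹)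
    1).tendsto_zero_of_tendsto h2
  simpa [Real.rpow_one] using h

lemma tendsto_u_atBot : Tendsto (fun y : ℝ => y * rexp (-(2⁻¹) * y ^ 2)) atBot (𝓝 0) := by
  have h := (tendsto_u_atTop.comp tendsto_neg_atBot_atTop).neg
  rw [neg_zero] at h
  refine h.congr fun x => ?_
  simp [Function.comp]

lemma integral_sq_exp_half : ∫ x : ℝ, x ^ 2 * rexp (-(2⁻¹) * x ^ 2) = Real.sqrt (2 * π) := by
  have hIoi := integral_Ioi_of_hasDerivAt_of_tendsto' (a := 0)
    (fun x _ => deriv_aux x) int_one_sub_sq_exp.integrableOn tendsto_u_atTop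
  have hIic := integral_Iic_of_hasDerivAt_of_tendsto' (a := 0)
    (fun x _ => deriv_aux x) int_one_sub_sq_exp.integrableOn tendsto_u_atBot
  have hsplit := intervalIntegral.integral_Iic_add_Ioi (b := (0:ℝ)) (μ := volume)
    int_one_sub_sq_exp.integrableOn int_one_sub_sq_exp.integrableOn
  rw [hIoi, hIic] at hsplit
  simp only [mul_zero, zero_mul, sub_zero, zero_sub, zero_pow, ne_eq, OfNat.ofNat_ne_zero,
    not_false_eq_true] at hsplit
  have hzero : ∫ x : ℝ, (1 - x ^ 2) * rexp (-(2⁻¹) * x ^ 2) = 0 := by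
    rw [← hsplit]; ring
  have hsub : ∫ x : ℝ, (1 - x ^ 2) * rexp (-(2⁻¹) * x ^ 2)
      = (∫ x : ℝ, rexp (-(2⁻¹) * x ^ 2)) - ∫ x : ℝ, x ^ 2 * rexp (-(2⁻¹) * x ^ 2) := by
    rw [← integral_sub int_exp_half int_sq_exp_half]
    refine integral_congr_ae (ae_of_all _ fun x => ?_)
    ring
  have hg : ∫ x : ℝ, rexp (-(2⁻¹) * x ^ 2) = Real.sqrt (2 * π) := by
    have := integral_gaussian 2⁻¹
    rw [show π / 2⁻¹ = 2 * π by ring] at this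
    exact this
  rw [hsub, hg] at hzero
  linarith

lemma integral_sq_gauss01 : ∫ x, x ^ 2 ∂(gaussianReal 0 1) = 1 := by
  rw [integral_gauss01, pdf01_eq]
  have : ∫ x : ℝ, ((Real.sqrt (2*π))⁻¹ * rexp (-(2⁻¹) * x ^ 2)) * x ^ 2
      = (Real.sqrt (2*π))⁻¹ * ∫ x : ℝ, x ^ 2 * rexp (-(2⁻¹) * x ^ 2) := by
    rw [← integral_const_mul]
    refine integral_congr_ae (ae_of_all _ fun x => ?_)
    ring
  rw [this, integral_sq_exp_half]
  rw [inv_mul_cancel₀ (by positivity)]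

def GR : Type := ℝ
instance : MeasurableSpace GR := inferInstanceAs (MeasurableSpace ℝ)
noncomputable instance : MeasureSpace GR := ⟨gaussianReal 0 1⟩
instance : IsProbabilityMeasure (volume : Measure GR) :=
  inferInstanceAs (IsProbabilityMeasure (gaussianReal 0 1))

lemma pi_prod_integrable {d : ℕ} (F : Fin d → ℝ → ℝ)
    (hF : ∀ i, Integrable (F i) (gaussianReal 0 1)) :
    Integrable (fun z : Fin d → ℝ => ∏ i, F i (z i))
      (Measure.pi fun _ : Fin d => gaussianReal 0 1) :=
  MeasureTheory.Integrable.fintype_prod (𝕜 := ℝ) (E := ℝ) (f := F) hF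

lemma pi_prod_integral {d : ℕ} (F : Fin d → ℝ → ℝ) :
    ∫ z, ∏ i, F i (z i) ∂(Measure.pi fun _ : Fin d => gaussianReal 0 1)
      = ∏ i, ∫ x, F i x ∂(gaussianReal 0 1) :=
  MeasureTheory.integral_fintype_prod_eq_prod (E := fun _ => ℝ) F

lemma integrable_mul_mul_gauss01 (G H K : ℝ → ℝ)
    (hG : G = id ∨ G = abs ∨ G = fun _ => 1) (hH : H = id ∨ H = abs ∨ H = fun _ => 1)
    (hK : K = id ∨ K = abs ∨ K = fun _ => 1) :
    Integrable (fun x : ℝ => G x * H x * K x) (gaussianReal 0 1) := by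
  have h0 : Integrable (fun _ : ℝ => (1:ℝ)) (gaussianReal 0 1) := integrable_const 1
  have h1 : Integrable (fun x : ℝ => |x|) (gaussianReal 0 1) := by
    simpa using integrable_abs_pow_gauss01 1
  have h2 : Integrable (fun x : ℝ => |x| * |x|) (gaussianReal 0 1) := by
    have := integrable_abs_pow_gauss01 2
    refine this.congr (ae_of_all _ fun x => ?_); ring
  have h3 : Integrable (fun x : ℝ => |x| * |x| * |x|) (gaussianReal 0 1) := by
    have := integrable_abs_pow_gauss01 3
    refine this.congr (ae_of_all _ fun x => ?_); ring
  have habs : ∀ W : ℝ → ℝ, W = id ∨ W = abs ∨ W = (fun _ => 1) →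
      (∀ x, |W x| = |x|) ∨ W = (fun _ => 1) := by
    rintro W (rfl | rfl | rfl)
    · exact Or.inl fun x => rfl
    · exact Or.inl fun x => abs_abs x
    · exact Or.inr rfl
  -- reduce to abs everywhere via mono'
  have hmeas : ∀ W : ℝ → ℝ, W = id ∨ W = abs ∨ W = (fun _ => 1) → Measurable W := by
    rintro W (rfl | rfl | rfl)
    exacts [measurable_id, measurable_id.abs, measurable_const]
  have hGm := hmeas G hG; have hHm := hmeas H hH; have hKm := hmeas K hK
  rcases habs G hG with hGa | rfl <;> rcases habs H hH with hHa | rfl <;>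
    rcases habs K hK with hKa | rfl
  · exact h3.mono' ((hGm.mul hHm).mul hKm).aestronglyMeasurable (ae_of_all _ fun x => by
      simp only [Real.norm_eq_abs, abs_mul, hGa, hHa, hKa]; exact le_refl _)
  · exact h2.mono' ((hGm.mul hHm).mul hKm).aestronglyMeasurable (ae_of_all _ fun x => by
      simp only [Real.norm_eq_abs, abs_mul, hGa, hHa, abs_one, mul_one]; exact le_refl _)
  · exact h2.mono' ((hGm.mul hHm).mul hKm).aestronglyMeasurable (ae_of_all _ fun x => by
      simp only [Real.norm_eq_abs, abs_mul, hGa, hKa, abs_one, mul_one, one_mul]; exact le_refl _)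
  · exact h1.mono' ((hGm.mul hHm).mul hKm).aestronglyMeasurable (ae_of_all _ fun x => by
      simp only [Real.norm_eq_abs, abs_mul, hGa, abs_one, mul_one]; exact le_refl _)
  · exact h2.mono' ((hGm.mul hHm).mul hKm).aestronglyMeasurable (ae_of_all _ fun x => by
      simp only [Real.norm_eq_abs, abs_mul, hHa, hKa, abs_one, one_mul]; exact le_refl _)
  · exact h1.mono' ((hGm.mul hHm).mul hKm).aestronglyMeasurable (ae_of_all _ fun x => by
      simp only [Real.norm_eq_abs, abs_mul, hHa, abs_one, mul_one, one_mul]; exact le_refl _)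
  · exact h1.mono' ((hGm.mul hHm).mul hKm).aestronglyMeasurable (ae_of_all _ fun x => by
      simp only [Real.norm_eq_abs, abs_mul, hKa, abs_one, one_mul]; exact le_refl _)
  · exact h0.mono' ((hGm.mul hHm).mul hKm).aestronglyMeasurable (ae_of_all _ fun x => by
      simp only [Real.norm_eq_abs, abs_mul, abs_one, mul_one]; exact le_refl _)

lemma prod_pair_eq {d : ℕ} (k l : Fin d) (z : Fin d → ℝ) :
    (∏ i, ((if i = k then z i else 1) * (if i = l then z i else 1))) = z k * z l := by
  rw [Finset.prod_mul_distrib, Finset.prod_ite_eq' Finset.univ k z,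
    Finset.prod_ite_eq' Finset.univ l z]
  simp

lemma prod_triple_eq {d : ℕ} (a b c : Fin d) (z : Fin d → ℝ) :
    (∏ i, ((if i = a then |z i| else 1) * (if i = b then |z i| else 1)
      * (if i = c then |z i| else 1))) = |z a| * |z b| * |z c| := by
  rw [Finset.prod_mul_distrib, Finset.prod_mul_distrib,
    Finset.prod_ite_eq' Finset.univ a (fun i => |z i|),
    Finset.prod_ite_eq' Finset.univ b (fun i => |z i|),
    Finset.prod_ite_eq' Finset.univ c (fun i => |z i|)]
  simp

lemma integrable_coord_mul {d : ℕ} (k l : Fin d) :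
    Integrable (fun z : Fin d → ℝ => z k * z l)
      (Measure.pi fun _ : Fin d => gaussianReal 0 1) := by
  have := pi_prod_integrable
    (fun i x => (if i = k then x else 1) * (if i = l then x else 1)) (fun i => ?_)
  · exact this.congr (ae_of_all _ fun z => prod_pair_eq k l z)
  · have := integrable_mul_mul_gauss01 (if i = k then id else fun _ => 1)
      (if i = l then id else fun _ => 1) (fun _ => 1)
      (by split <;> simp) (by split <;> simp) (by simp)
    refine this.congr (ae_of_all _ fun x => ?_)
    split_ifs <;> simp_all

lemma integral_coord_mul {d : ℕ} (k l : Fin d) :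
    ∫ z, z k * z l ∂(Measure.pi fun _ : Fin d => gaussianReal 0 1)
      = if k = l then 1 else 0 := by
  have h1 : (∫ z, z k * z l ∂(Measure.pi fun _ : Fin d => gaussianReal 0 1))
      = ∫ z, ∏ i, ((if i = k then z i else 1) * (if i = l then z i else 1))
        ∂(Measure.pi fun _ : Fin d => gaussianReal 0 1) :=
    integral_congr_ae (ae_of_all _ fun z => (prod_pair_eq k l z).symm)
  have h2 := pi_prod_integral (d := d)
    (fun i x => (if i = k then x else 1) * (if i = l then x else 1))
  rw [h1, h2]
  by_cases hkl : k = l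
  · subst hkl
    simp only [if_pos rfl]
    refine Finset.prod_eq_one fun i _ => ?_
    by_cases hk : i = k
    · subst hk
      simp only [if_pos rfl]
      have : ∫ x, x * x ∂(gaussianReal 0 1) = 1 := by
        rw [← integral_sq_gauss01]
        refine integral_congr_ae (ae_of_all _ fun x => ?_); ring
      simpa using this
    · simp [hk]
  · rw [if_neg hkl]
    refine Finset.prod_eq_zero (Finset.mem_univ k) ?_
    simpa [hkl] using integral_id_gauss01

lemma integrable_coord_abs_triple {d : ℕ} (a b c : Fin d) :
    Integrable (fun z : Fin d → ℝ => |z a| * |z b| * |z c|)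
      (Measure.pi fun _ : Fin d => gaussianReal 0 1) := by
  have := pi_prod_integrable
    (fun i x => (if i = a then |x| else 1) * (if i = b then |x| else 1)
      * (if i = c then |x| else 1)) (fun i => ?_)
  · exact this.congr (ae_of_all _ fun z => prod_triple_eq a b c z)
  · have := integrable_mul_mul_gauss01 (if i = a then abs else fun _ => 1)
      (if i = b then abs else fun _ => 1) (if i = c then abs else fun _ => 1)
      (by split <;> simp) (by split <;> simp) (by split <;> simp)
    refine this.congr (ae_of_all _ fun x => ?_)
    split_ifs <;> simp_all

lemma taylor_bound {d : ℕ} {g : (Fin d → ℝ) → ℝ} (hg : ContDiff ℝ 3 g) {B : ℝ}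
    (hB : ∀ y, ‖iteratedFDeriv ℝ 3 g y‖ ≤ B) (x h : Fin d → ℝ) :
    ‖fderiv ℝ g (x + h) - fderiv ℝ g x - fderiv ℝ (fderiv ℝ g) x h‖ ≤ B * ‖h‖ * ‖h‖ := by
  have hF : ContDiff ℝ 2 (fderiv ℝ g) := hg.fderiv_right (by norm_num)
  have hF' : ContDiff ℝ 1 (fderiv ℝ (fderiv ℝ g)) := hF.fderiv_right (by norm_num)
  letI : NormedAddCommGroup ((Fin d → ℝ) →L[ℝ] (Fin d → ℝ) →L[ℝ] (Fin d → ℝ) →L[ℝ] ℝ) :=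
    ContinuousLinearMap.toNormedAddCommGroup (𝕜 := ℝ) (𝕜₂ := ℝ) (E := Fin d → ℝ) (F := (Fin d → ℝ) →L[ℝ] (Fin d → ℝ) →L[ℝ] ℝ)
  letI : NormedSpace ℝ ((Fin d → ℝ) →L[ℝ] (Fin d → ℝ) →L[ℝ] (Fin d → ℝ) →L[ℝ] ℝ) :=
    ContinuousLinearMap.toNormedSpace (𝕜 := ℝ) (𝕜₂ := ℝ) (E := Fin d → ℝ) (F := (Fin d → ℝ) →L[ℝ] (Fin d → ℝ) →L[ℝ] ℝ)
  have hbound : ∀ y, ‖fderiv ℝ (fderiv ℝ (fderiv ℝ g)) y‖ ≤ B := by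
    intro y
    have h0 := norm_iteratedFDeriv_zero (𝕜 := ℝ) (f := fderiv ℝ (fderiv ℝ (fderiv ℝ g))) (x := y)
    have h1 := norm_iteratedFDeriv_fderiv (𝕜 := ℝ) (n := 0) (f := fderiv ℝ (fderiv ℝ g)) (x := y)
    have h2 := norm_iteratedFDeriv_fderiv (𝕜 := ℝ) (n := 1) (f := fderiv ℝ g) (x := y)
    have h3 := norm_iteratedFDeriv_fderiv (𝕜 := ℝ) (n := 2) (f := g) (x := y)
    exact (h0.symm.trans (h1.trans (h2.trans h3))).le.trans (hB y)
  have hlip : ∀ y, ‖fderiv ℝ (fderiv ℝ g) y - fderiv ℝ (fderiv ℝ g) x‖ ≤ B * ‖y - x‖ := by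
    intro y
    exact convex_univ.norm_image_sub_le_of_norm_fderiv_le
      (fun w _ => (hF'.differentiable (by norm_num)) w)
      (fun w _ => hbound w) trivial trivial
  have hBnn : 0 ≤ B := le_trans (norm_nonneg _) (hB x)
  have hseg : ∀ w ∈ segment ℝ x (x + h), ‖w - x‖ ≤ ‖h‖ := by
    rintro w ⟨a, b, ha, hb, hab, rfl⟩
    have : a • x + b • (x + h) - x = b • h := by
      rw [smul_add]
      have : a • x + b • x = x := by
        rw [← add_smul, hab, one_smul]
      rw [← add_assoc, this]
      abel
    rw [this, norm_smul]
    calc ‖b‖ * ‖h‖ ≤ 1 * ‖h‖ := by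
          apply mul_le_mul_of_nonneg_right _ (norm_nonneg h)
          rw [Real.norm_eq_abs, abs_of_nonneg hb]
          linarith
      _ = ‖h‖ := one_mul _
  have key := (convex_segment x (x + h)).norm_image_sub_le_of_norm_fderiv_le'
    (f := fderiv ℝ g) (φ := fderiv ℝ (fderiv ℝ g) x) (C := B * ‖h‖)
    (fun w _ => (hF.differentiable (by norm_num)) w)
    (fun w hw => le_trans (hlip w) (mul_le_mul_of_nonneg_left (hseg w hw) hBnn))
    (left_mem_segment ℝ x (x + h)) (right_mem_segment ℝ x (x + h))
  rw [add_sub_cancel_left] at key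
  calc ‖fderiv ℝ g (x + h) - fderiv ℝ g x - (fderiv ℝ (fderiv ℝ g) x) h‖
      ≤ B * ‖h‖ * ‖h‖ := key


lemma pdx_taylor {d : ℕ} {g : (Fin d → ℝ) → ℝ} (hg : ContDiff ℝ 3 g) {B : ℝ}
    (hB : ∀ y, ‖iteratedFDeriv ℝ 3 g y‖ ≤ B) (x h : Fin d → ℝ) (i : Fin d) :
    |pdx i g (x + h) - pdx i g x - fderiv ℝ (fderiv ℝ g) x h (Pi.single i 1)|
      ≤ B * ‖h‖ * ‖h‖ := by
  have key := taylor_bound hg hB x h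
  have happ := (fderiv ℝ g (x + h) - fderiv ℝ g x
    - fderiv ℝ (fderiv ℝ g) x h).le_opNorm (Pi.single i (1:ℝ))
  rw [Pi.norm_single, norm_one, mul_one] at happ
  simp only [ContinuousLinearMap.sub_apply, Real.norm_eq_abs] at happ
  unfold pdx
  exact le_trans happ key

lemma pdx_pdx {d : ℕ} {g : (Fin d → ℝ) → ℝ} (hg : ContDiff ℝ 3 g) (x : Fin d → ℝ)
    (i j : Fin d) :
    pdx i (fun y => pdx j g y) x
      = fderiv ℝ (fderiv ℝ g) x (Pi.single i 1) (Pi.single j 1) := by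
  have hdiff : DifferentiableAt ℝ (fderiv ℝ g) x :=
    ((hg.fderiv_right (m := 2) (by norm_num)).differentiable (by norm_num)) x
  have := fderiv_clm_apply (c := fderiv ℝ g) (u := fun _ => Pi.single j (1:ℝ))
    hdiff (differentiableAt_const _)
  unfold pdx
  rw [this]
  simp

lemma fderiv2_expand {d : ℕ} {g : (Fin d → ℝ) → ℝ} (x h : Fin d → ℝ) :
    fderiv ℝ (fderiv ℝ g) x h
      = ∑ k, h k • fderiv ℝ (fderiv ℝ g) x (Pi.single k 1) := by
  have hh : h = ∑ k, h k • (Pi.single k 1 : Fin d → ℝ) := by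
    funext j
    rw [Finset.sum_apply]
    simp [Pi.single_apply]
  conv_lhs => rw [hh]
  rw [map_sum]
  congr 1
  funext k
  rw [_root_.map_smul]

/-- Monte Carlo approximation of the second-order diffusion operator: the
expectation over a centered Gaussian vector `W_Δ` with covariance `ρ Δ`
(realized as `√Δ · L z` with `L Lᵀ = ρ` and `z` a standard Gaussian vector)
approximates `∑ ρᵢⱼ σᵢ σⱼ ∂²f/∂xᵢ∂xⱼ` with error at most `C(x) √Δ`. -/
theorem stmt0 {d : ℕ} (f : ℝ → (Fin d → ℝ) → ℝ) (σ : (Fin d → ℝ) → Fin d → ℝ)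
    (ρ : Matrix (Fin d) (Fin d) ℝ) (hρ : ρ.PosSemidef)
    (t : ℝ) (x : Fin d → ℝ)
    (hf : ∀ s, ContDiff ℝ 3 (f s))
    (B : ℝ) (hB : ∀ s y, ‖iteratedFDeriv ℝ 3 (f s) y‖ ≤ B)
    (S : ℝ) (hσ : ∀ y i, |σ y i| ≤ S) :
    ∃ C : ℝ, ∀ Δ : ℝ, 0 < Δ → ∀ L : Matrix (Fin d) (Fin d) ℝ, L * L.transpose = ρ →
      |(∑ i, ∑ j, ρ i j * σ x i * σ x j * pdx i (fun y => pdx j (f t) y) x)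
        - ∫ z, (∑ i, ((pdx i (f t) (fun k => x k + σ x k * (Real.sqrt Δ * ∑ m', L k m' * z m'))
                  - pdx i (f t) x) / Δ) * σ x i * (Real.sqrt Δ * ∑ m', L i m' * z m'))
            ∂(Measure.pi fun _ : Fin d => gaussianReal 0 1)|
      ≤ C * Real.sqrt Δ := by
  classical
  have hg : ContDiff ℝ 3 (f t) := hf t
  have hB3 : ∀ y, ‖iteratedFDeriv ℝ 3 (f t) y‖ ≤ B := hB t
  have hBnn : 0 ≤ B := le_trans (norm_nonneg _) (hB3 x)
  set S' : ℝ := max S 0 with hS'def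
  have hS'nn : 0 ≤ S' := le_max_right _ _
  have hσS' : ∀ i, |σ x i| ≤ S' := fun i => le_trans (hσ x i) (le_max_left _ _)
  set Q : ℝ := Real.sqrt (∑ j, ρ j j) with hQdef
  have hQnn : 0 ≤ Q := Real.sqrt_nonneg _
  set μd := Measure.pi fun _ : Fin d => gaussianReal 0 1 with hμd
  set M3 : ℝ := ∑ a, ∑ b, ∑ c, ∫ z, |z a| * |z b| * |z c| ∂μd with hM3
  refine ⟨(d : ℝ) * (B * (S' ^ 3 * Q ^ 3)) * M3, ?_⟩
  intro Δ hΔ L hL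
  set s : ℝ := Real.sqrt Δ with hsdef
  have hs : 0 < s := Real.sqrt_pos.mpr hΔ
  have hss : s * s = Δ := Real.mul_self_sqrt hΔ.le
  have hρdiag : ∀ j, ρ j j = ∑ m, L j m ^ 2 := by
    intro j; rw [← hL, Matrix.mul_apply]
    refine Finset.sum_congr rfl fun m _ => ?_
    rw [Matrix.transpose_apply]; ring
  have hQL : ∀ k m, |L k m| ≤ Q := by
    intro k m
    rw [hQdef, ← Real.sqrt_sq_eq_abs]
    apply Real.sqrt_le_sqrt
    calc L k m ^ 2 ≤ ∑ m', L k m' ^ 2 :=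
          Finset.single_le_sum (f := fun m' => L k m' ^ 2) (fun _ _ => sq_nonneg _)
            (Finset.mem_univ m)
      _ = ρ k k := (hρdiag k).symm
      _ ≤ ∑ j, ρ j j := Finset.single_le_sum (f := fun j => ρ j j)
          (fun j _ => by rw [hρdiag]; positivity) (Finset.mem_univ k)
  set W : (Fin d → ℝ) → Fin d → ℝ := fun z k => s * ∑ m', L k m' * z m' with hWdef
  set H : (Fin d → ℝ) → Fin d → ℝ := fun z k => σ x k * W z k with hHdef
  set N : (Fin d → ℝ) → ℝ := fun z => ∑ m, |z m| with hNdef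
  have hNnn : ∀ z, 0 ≤ N z := fun z => Finset.sum_nonneg fun m _ => abs_nonneg _
  have hW : ∀ z k, |W z k| ≤ s * (Q * N z) := by
    intro z k
    rw [show W z k = s * ∑ m', L k m' * z m' from rfl, abs_mul, abs_of_pos hs]
    apply mul_le_mul_of_nonneg_left _ hs.le
    calc |∑ m', L k m' * z m'| ≤ ∑ m', |L k m' * z m'| := Finset.abs_sum_le_sum_abs _ _
      _ ≤ ∑ m', Q * |z m'| := Finset.sum_le_sum fun m' _ => by
          rw [abs_mul]; exact mul_le_mul_of_nonneg_right (hQL k m') (abs_nonneg _)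
      _ = Q * N z := by rw [show N z = ∑ m, |z m| from rfl, Finset.mul_sum]
  have hH : ∀ z, ‖H z‖ ≤ s * (S' * (Q * N z)) := by
    intro z
    refine (pi_norm_le_iff_of_nonneg ?_).mpr ?_
    · have := hNnn z; positivity
    · intro k
      rw [Real.norm_eq_abs, show H z k = σ x k * W z k from rfl]
      calc |σ x k * W z k| = |σ x k| * |W z k| := abs_mul _ _
        _ ≤ S' * (s * (Q * N z)) := mul_le_mul (hσS' k) (hW z k) (abs_nonneg _) hS'nn
        _ = s * (S' * (Q * N z)) := by ring
  set D : Fin d → Fin d → ℝ :=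
    fun a b => fderiv ℝ (fderiv ℝ (f t)) x (Pi.single a 1) (Pi.single b 1) with hDdef
  set r : Fin d → (Fin d → ℝ) → ℝ := fun i z =>
    pdx i (f t) (x + H z) - pdx i (f t) x
      - fderiv ℝ (fderiv ℝ (f t)) x (H z) (Pi.single i 1) with hrdef
  have hrb : ∀ i z, |r i z| ≤ B * (s * (S' * (Q * N z))) * (s * (S' * (Q * N z))) := by
    intro i z
    refine le_trans (pdx_taylor hg hB3 x (H z) i) ?_
    have h1 := hH z
    have h0 := norm_nonneg (H z)
    have h2 : (0:ℝ) ≤ s * (S' * (Q * N z)) := le_trans h0 h1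
    nlinarith [mul_le_mul h1 h1 h0 h2]
  set c4 : Fin d → Fin d → Fin d → Fin d → ℝ :=
    fun i k m m' => D k i * σ x k * σ x i * (L k m * L i m') with hc4def
  set P : (Fin d → ℝ) → ℝ :=
    fun z => ∑ i, ∑ k, ∑ m, ∑ m', c4 i k m m' * (z m * z m') with hPdef
  set R : (Fin d → ℝ) → ℝ := fun z => ∑ i, r i z / Δ * σ x i * W z i with hRdef
  have hexp : ∀ z i, fderiv ℝ (fderiv ℝ (f t)) x (H z) (Pi.single i 1)
      = ∑ k, H z k * D k i := by
    intro z i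
    rw [fderiv2_expand]
    rw [ContinuousLinearMap.sum_apply]
    refine Finset.sum_congr rfl fun k _ => ?_
    rw [ContinuousLinearMap.smul_apply, smul_eq_mul]
  have hIPR : ∀ z : Fin d → ℝ,
      (∑ i, ((pdx i (f t) (x + H z) - pdx i (f t) x) / Δ) * σ x i * W z i) = P z + R z := by
    intro z
    have hPz : P z = ∑ i, (∑ k, H z k * D k i) / Δ * σ x i * W z i := by
      rw [show P z = ∑ i, ∑ k, ∑ m, ∑ m', c4 i k m m' * (z m * z m') from rfl]
      refine Finset.sum_congr rfl fun i _ => ?_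
      rw [show W z i = s * ∑ m', L i m' * z m' from rfl, Finset.sum_div, Finset.sum_mul,
        Finset.sum_mul]
      refine Finset.sum_congr rfl fun k _ => ?_
      rw [show H z k = σ x k * (s * ∑ m, L k m * z m) from rfl]
      have hAA : (∑ m, L k m * z m) * (∑ m', L i m' * z m')
          = ∑ m, ∑ m', (L k m * L i m') * (z m * z m') := by
        rw [Finset.sum_mul_sum]
        refine Finset.sum_congr rfl fun m _ => Finset.sum_congr rfl fun m' _ => by ring
      have key : σ x k * (s * ∑ m, L k m * z m) * D k i / Δ * σ x i
            * (s * ∑ m', L i m' * z m')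
          = (D k i * σ x k * σ x i)
            * ((∑ m, L k m * z m) * (∑ m', L i m' * z m')) := by
        rw [← hss]
        field_simp
      rw [key, hAA, Finset.mul_sum]
      refine Finset.sum_congr rfl fun m _ => ?_
      rw [Finset.mul_sum]
      refine Finset.sum_congr rfl fun m' _ => ?_
      rw [show c4 i k m m' = D k i * σ x k * σ x i * (L k m * L i m') from rfl]
      ring
    rw [hPz, show R z = ∑ i, r i z / Δ * σ x i * W z i from rfl, ← Finset.sum_add_distrib]
    refine Finset.sum_congr rfl fun i _ => ?_
    have : pdx i (f t) (x + H z) - pdx i (f t) x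
        = fderiv ℝ (fderiv ℝ (f t)) x (H z) (Pi.single i 1) + r i z := by
      rw [show r i z = pdx i (f t) (x + H z) - pdx i (f t) x
        - fderiv ℝ (fderiv ℝ (f t)) x (H z) (Pi.single i 1) from rfl]; ring
    rw [this, hexp z i]
    ring
  -- cube expansion
  have hcube : ∀ z : Fin d → ℝ, N z ^ 3 = ∑ a, ∑ b, ∑ c, |z a| * |z b| * |z c| := by
    intro z
    have h3 : N z ^ 3 = (∑ a, |z a|) * (∑ b, |z b|) * (∑ c, |z c|) := by
      rw [show N z = ∑ m, |z m| from rfl]; ring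
    rw [h3, Finset.sum_mul_sum]
    rw [Finset.sum_mul]
    refine Finset.sum_congr rfl fun a _ => ?_
    rw [Finset.sum_mul]
    refine Finset.sum_congr rfl fun b _ => ?_
    rw [Finset.mul_sum]
  -- integrability of P and its value
  have hPint : Integrable P μd :=
    integrable_finset_sum _ (fun i _ => integrable_finset_sum _ (fun k _ =>
      integrable_finset_sum _ (fun m _ => integrable_finset_sum _ (fun m' _ =>
        (integrable_coord_mul m m').const_mul _))))
  have hρki : ∀ k i, ρ k i = ∑ m, L k m * L i m := by
    intro k i; rw [← hL, Matrix.mul_apply]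
    exact Finset.sum_congr rfl fun m _ => by rw [Matrix.transpose_apply]
  have hPval : ∫ z, P z ∂μd = ∑ i, ∑ k, D k i * σ x k * σ x i * ρ k i := by
    rw [show (fun z => P z) = fun z => ∑ i, ∑ k, ∑ m, ∑ m', c4 i k m m' * (z m * z m')
      from rfl]
    rw [integral_finset_sum _ (fun i _ => integrable_finset_sum _ (fun k _ =>
      integrable_finset_sum _ (fun m _ => integrable_finset_sum _ (fun m' _ =>
        (integrable_coord_mul m m').const_mul _))))]
    refine Finset.sum_congr rfl fun i _ => ?_
    rw [integral_finset_sum _ (fun k _ => integrable_finset_sum _ (fun m _ =>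
      integrable_finset_sum _ (fun m' _ => (integrable_coord_mul m m').const_mul _)))]
    refine Finset.sum_congr rfl fun k _ => ?_
    rw [integral_finset_sum _ (fun m _ =>
      integrable_finset_sum _ (fun m' _ => (integrable_coord_mul m m').const_mul _))]
    have hinner : ∀ m : Fin d, (∫ z, ∑ m', c4 i k m m' * (z m * z m') ∂μd)
        = c4 i k m m := by
      intro m
      rw [integral_finset_sum _ (fun m' _ => (integrable_coord_mul m m').const_mul _)]
      have : ∀ m' : Fin d, (∫ z, c4 i k m m' * (z m * z m') ∂μd)
          = c4 i k m m' * (if m = m' then 1 else 0) := by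
        intro m'
        rw [integral_const_mul, integral_coord_mul]
      rw [Finset.sum_congr rfl fun m' _ => this m']
      simp only [mul_ite, mul_one, mul_zero, Finset.sum_ite_eq, Finset.mem_univ, if_pos]
    rw [Finset.sum_congr rfl fun m _ => hinner m]
    rw [show (fun m => c4 i k m m) = fun m => D k i * σ x k * σ x i * (L k m * L i m)
      from rfl]
    rw [← Finset.mul_sum, hρki k i]
  -- the target sum equals ∫ P
  have hTP : (∑ i, ∑ j, ρ i j * σ x i * σ x j * pdx i (fun y => pdx j (f t) y) x)
      = ∫ z, P z ∂μd := by
    rw [hPval, Finset.sum_comm]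
    refine Finset.sum_congr rfl fun i _ => Finset.sum_congr rfl fun j _ => ?_
    rw [pdx_pdx hg x j i]
    rw [show D j i = fderiv ℝ (fderiv ℝ (f t)) x (Pi.single j 1) (Pi.single i 1) from rfl]
    ring
  -- continuity of R
  have hWc : ∀ k : Fin d, Continuous fun z : Fin d → ℝ => W z k := by
    intro k
    exact continuous_const.mul (continuous_finset_sum _ fun m' _ =>
      continuous_const.mul (continuous_apply m'))
  have hHc : Continuous H := continuous_pi fun k => continuous_const.mul (hWc k)
  have hevalc : ∀ i : Fin d, Continuous fun T : (Fin d → ℝ) →L[ℝ] ℝ => T (Pi.single i 1) := by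
    intro i
    have := isBoundedBilinearMap_apply
      (𝕜 := ℝ) (E := Fin d → ℝ) (F := ℝ) |>.continuous
    exact this.comp (continuous_id.prodMk continuous_const)
  have hRc : Continuous R := by
    refine continuous_finset_sum _ fun i _ => ?_
    refine Continuous.mul (Continuous.mul ?_ continuous_const) (hWc i)
    refine Continuous.div_const ?_ Δ
    have hpdxc : Continuous fun z : Fin d → ℝ => pdx i (f t) (x + H z) := by
      have h1 : Continuous fun z : Fin d → ℝ => fderiv ℝ (f t) (x + H z) :=
        (hg.continuous_fderiv (by norm_num)).comp (continuous_const.add hHc)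
      exact (hevalc i).comp h1
    have h2 : Continuous fun z : Fin d → ℝ =>
        fderiv ℝ (fderiv ℝ (f t)) x (H z) (Pi.single i 1) :=
      (hevalc i).comp ((fderiv ℝ (fderiv ℝ (f t)) x).continuous.comp hHc)
    exact (hpdxc.sub continuous_const).sub h2
  -- pointwise bound for R
  have hRbound : ∀ z, |R z| ≤ (d:ℝ) * (B * (S' ^ 3 * Q ^ 3)) * s * N z ^ 3 := by
    intro z
    have ha : (0:ℝ) ≤ s * (S' * (Q * N z)) := by
      have := hNnn z
      have : (0:ℝ) ≤ Q * N z := mul_nonneg hQnn this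
      have : (0:ℝ) ≤ S' * (Q * N z) := mul_nonneg hS'nn this
      exact mul_nonneg hs.le this
    have hb : (0:ℝ) ≤ s * (Q * N z) := mul_nonneg hs.le (mul_nonneg hQnn (hNnn z))
    have hterm : ∀ i : Fin d, |r i z / Δ * σ x i * W z i|
        ≤ B * (S' ^ 3 * Q ^ 3) * s * N z ^ 3 := by
      intro i
      have e1 : |r i z / Δ * σ x i * W z i| = |r i z| / Δ * |σ x i| * |W z i| := by
        rw [abs_mul, abs_mul, abs_div, abs_of_pos hΔ]
      rw [e1]
      have step1 : |r i z| / Δ ≤ B * (s * (S' * (Q * N z))) * (s * (S' * (Q * N z))) / Δ :=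
        div_le_div_of_nonneg_right (hrb i z) hΔ.le |>.trans_eq rfl
      have hC1 : (0:ℝ) ≤ B * (s * (S' * (Q * N z))) * (s * (S' * (Q * N z))) / Δ :=
        div_nonneg (mul_nonneg (mul_nonneg hBnn ha) ha) hΔ.le
      have step2 : |r i z| / Δ * |σ x i|
          ≤ B * (s * (S' * (Q * N z))) * (s * (S' * (Q * N z))) / Δ * S' :=
        mul_le_mul step1 (hσS' i) (abs_nonneg _) hC1
      have step3 : |r i z| / Δ * |σ x i| * |W z i|
          ≤ B * (s * (S' * (Q * N z))) * (s * (S' * (Q * N z))) / Δ * S' * (s * (Q * N z)) :=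
        mul_le_mul step2 (hW z i) (abs_nonneg _) (mul_nonneg hC1 hS'nn)
      refine step3.trans_eq ?_
      rw [← hss]
      field_simp
    calc |R z| ≤ ∑ i, |r i z / Δ * σ x i * W z i| := Finset.abs_sum_le_sum_abs _ _
      _ ≤ ∑ _i : Fin d, B * (S' ^ 3 * Q ^ 3) * s * N z ^ 3 :=
          Finset.sum_le_sum fun i _ => hterm i
      _ = (d:ℝ) * (B * (S' ^ 3 * Q ^ 3) * s * N z ^ 3) := by
          rw [Finset.sum_const, Finset.card_univ, Fintype.card_fin, nsmul_eq_mul]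
      _ = (d:ℝ) * (B * (S' ^ 3 * Q ^ 3)) * s * N z ^ 3 := by ring
  -- integrable bound
  have htriple : Integrable (fun z : Fin d → ℝ => ∑ a, ∑ b, ∑ c, |z a| * |z b| * |z c|) μd :=
    integrable_finset_sum _ (fun a _ => integrable_finset_sum _ (fun b _ =>
      integrable_finset_sum _ (fun c _ => integrable_coord_abs_triple a b c)))
  have hbint : Integrable (fun z => (d:ℝ) * (B * (S' ^ 3 * Q ^ 3)) * s * N z ^ 3) μd := by
    have h2 := htriple.const_mul ((d:ℝ) * (B * (S' ^ 3 * Q ^ 3)) * s)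
    refine h2.congr (ae_of_all _ fun z => ?_)
    beta_reduce
    rw [hcube z]
  have hRint : Integrable R μd :=
    hbint.mono' hRc.aestronglyMeasurable
      (ae_of_all _ fun z => by rw [Real.norm_eq_abs]; exact hRbound z)
  -- split the integral
  have hIint_eq : ∫ z, (∑ i, ((pdx i (f t) (x + H z) - pdx i (f t) x) / Δ) * σ x i * W z i) ∂μd
      = ∫ z, P z ∂μd + ∫ z, R z ∂μd := by
    rw [← integral_add hPint hRint]
    exact integral_congr_ae (ae_of_all _ fun z => hIPR z)
  -- bound on |∫ R|
  have hintb : ∫ z, (d:ℝ) * (B * (S' ^ 3 * Q ^ 3)) * s * N z ^ 3 ∂μd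
      = (d:ℝ) * (B * (S' ^ 3 * Q ^ 3)) * M3 * s := by
    have h1 : ∫ z, (d:ℝ) * (B * (S' ^ 3 * Q ^ 3)) * s * N z ^ 3 ∂μd
        = ((d:ℝ) * (B * (S' ^ 3 * Q ^ 3)) * s) * ∫ z, ∑ a, ∑ b, ∑ c, |z a| * |z b| * |z c| ∂μd := by
      rw [← integral_const_mul]
      exact integral_congr_ae (ae_of_all _ fun z => by beta_reduce; rw [hcube z])
    rw [h1]
    have h2 : ∫ z, ∑ a, ∑ b, ∑ c, |z a| * |z b| * |z c| ∂μd = M3 := by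
      rw [hM3]
      rw [integral_finset_sum _ (fun a _ => integrable_finset_sum _ (fun b _ =>
        integrable_finset_sum _ (fun c _ => integrable_coord_abs_triple a b c)))]
      refine Finset.sum_congr rfl fun a _ => ?_
      rw [integral_finset_sum _ (fun b _ =>
        integrable_finset_sum _ (fun c _ => integrable_coord_abs_triple a b c))]
      refine Finset.sum_congr rfl fun b _ => ?_
      rw [integral_finset_sum _ (fun c _ => integrable_coord_abs_triple a b c)]
    rw [h2]
    ring
  have habs : |∫ z, R z ∂μd| ≤ (d:ℝ) * (B * (S' ^ 3 * Q ^ 3)) * M3 * s := by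
    calc |∫ z, R z ∂μd| ≤ ∫ z, |R z| ∂μd := by
          simpa [Real.norm_eq_abs] using norm_integral_le_integral_norm (μ := μd) R
      _ ≤ ∫ z, (d:ℝ) * (B * (S' ^ 3 * Q ^ 3)) * s * N z ^ 3 ∂μd :=
          integral_mono hRint.abs hbint (fun z => hRbound z)
      _ = (d:ℝ) * (B * (S' ^ 3 * Q ^ 3)) * M3 * s := hintb
  -- final assembly
  have final : |(∑ i, ∑ j, ρ i j * σ x i * σ x j * pdx i (fun y => pdx j (f t) y) x)
      - ∫ z, (∑ i, ((pdx i (f t) (x + H z) - pdx i (f t) x) / Δ) * σ x i * W z i) ∂μd|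
      ≤ ((d:ℝ) * (B * (S' ^ 3 * Q ^ 3)) * M3) * s := by
    rw [hIint_eq, hTP]
    have : (∫ z, P z ∂μd) - ((∫ z, P z ∂μd) + ∫ z, R z ∂μd) = -(∫ z, R z ∂μd) := by ring
    rw [this, abs_neg]
    calc |∫ z, R z ∂μd| ≤ (d:ℝ) * (B * (S' ^ 3 * Q ^ 3)) * M3 * s := habs
      _ = ((d:ℝ) * (B * (S' ^ 3 * Q ^ 3)) * M3) * s := by ring
  exact final
end

section
/- Let f : ℝ → ℝ be five-times continuously differentiable with bounded fifth derivative, and let W_Δ be a centered Gaussian random variable with variance Δ. Define the antithetic estimator A(Δ) = (1/2)·E[ (f'(x + W_Δ) − f'(x)) W_Δ/Δ + (f'(x − W_Δ) − f'(x)) (−W_Δ)/Δ ]. Then |f''(x) − A(Δ)| ≤ C Δ for a constant C depending only on the bounds on the derivatives of f. -/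
set_option maxHeartbeats 1000000

open MeasureTheory ProbabilityTheory Real

lemma aux_int_abs (n : ℕ) {b : ℝ} (hb : 0 < b) :
    Integrable (fun x : ℝ => |x| ^ n * Real.exp (-b * x ^ 2)) := by
  have hC : Integrable (fun x : ℝ =>
      Real.exp ((n : ℝ) ^ 2 / (2 * b)) * Real.exp (-(b / 2) * x ^ 2)) :=
    (integrable_exp_neg_mul_sq (by positivity)).const_mul _
  refine hC.mono' ?_ ?_
  · exact ((continuous_abs.pow n).mul
      ((continuous_const.mul (continuous_pow 2)).rexp)).aestronglyMeasurable
  · filter_upwards with x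
    have habs : |x| ≤ Real.exp |x| := (le_add_of_nonneg_left zero_le_one).trans
      (by linarith [Real.add_one_le_exp |x|])
    have h1 : |x| ^ n ≤ Real.exp ((n : ℝ) * |x|) := by
      calc |x| ^ n ≤ (Real.exp |x|) ^ n := pow_le_pow_left₀ (abs_nonneg x) habs n
        _ = Real.exp ((n : ℝ) * |x|) := by rw [← Real.exp_nat_mul, mul_comm]
    have h2 : (n : ℝ) * |x| + (-b * x ^ 2) ≤ (n : ℝ) ^ 2 / (2 * b) + (-(b / 2) * x ^ 2) := by
      have e : ((n : ℝ) ^ 2 / (2 * b)) * (2 * b) = (n : ℝ) ^ 2 := by field_simp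
      have h4 : ((n : ℝ) * |x| + (-b * x ^ 2)) * (2 * b)
          ≤ ((n : ℝ) ^ 2 / (2 * b) + (-(b / 2) * x ^ 2)) * (2 * b) := by
        have h5 : b ^ 2 * |x| ^ 2 = b ^ 2 * x ^ 2 := by rw [sq_abs]
        nlinarith [sq_nonneg ((n : ℝ) - b * |x|), h5]
      exact le_of_mul_le_mul_right h4 (by positivity)
    have h3 : (0:ℝ) ≤ |x| ^ n := pow_nonneg (abs_nonneg x) n
    calc ‖|x| ^ n * Real.exp (-b * x ^ 2)‖ = |x| ^ n * Real.exp (-b * x ^ 2) := by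
          rw [Real.norm_eq_abs, abs_of_nonneg (by positivity)]
      _ ≤ Real.exp ((n : ℝ) * |x|) * Real.exp (-b * x ^ 2) :=
          mul_le_mul_of_nonneg_right h1 (Real.exp_pos _).le
      _ = Real.exp ((n : ℝ) * |x| + (-b * x ^ 2)) := (Real.exp_add _ _).symm
      _ ≤ Real.exp ((n : ℝ) ^ 2 / (2 * b) + (-(b / 2) * x ^ 2)) := Real.exp_le_exp.2 h2
      _ = Real.exp ((n : ℝ) ^ 2 / (2 * b)) * Real.exp (-(b / 2) * x ^ 2) := Real.exp_add _ _

lemma aux_int_pow (n : ℕ) {b : ℝ} (hb : 0 < b) :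
    Integrable (fun x : ℝ => x ^ n * Real.exp (-b * x ^ 2)) := by
  refine (aux_int_abs n hb).mono' ?_ ?_
  · exact ((continuous_pow n).mul
      ((continuous_const.mul (continuous_pow 2)).rexp)).aestronglyMeasurable
  · filter_upwards with x
    rw [Real.norm_eq_abs, abs_mul, abs_of_nonneg (Real.exp_pos _).le, abs_pow]

lemma aux_rec (k : ℕ) {b : ℝ} (hb : 0 < b) :
    ∫ x : ℝ, x ^ (k + 2) * Real.exp (-b * x ^ 2)
      = ((k + 1 : ℝ) / (2 * b)) * ∫ x : ℝ, x ^ k * Real.exp (-b * x ^ 2) := by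
  have hi1 : Integrable fun x : ℝ => x ^ k * Real.exp (-b * x ^ 2) := aux_int_pow k hb
  have hi2 : Integrable fun x : ℝ => x ^ (k + 2) * Real.exp (-b * x ^ 2) := aux_int_pow (k + 2) hb
  have hd : ∀ x : ℝ, HasDerivAt (fun x : ℝ => x ^ (k + 1) * Real.exp (-b * x ^ 2))
      ((k + 1 : ℝ) * (x ^ k * Real.exp (-b * x ^ 2))
        - (2 * b) * (x ^ (k + 2) * Real.exp (-b * x ^ 2))) x := by
    intro x
    have h1 : HasDerivAt (fun x : ℝ => x ^ (k + 1)) ((k + 1 : ℝ) * x ^ k) x := by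
      simpa using hasDerivAt_pow (k + 1) x
    have h2 : HasDerivAt (fun x : ℝ => Real.exp (-b * x ^ 2))
        (Real.exp (-b * x ^ 2) * (-b * (2 * x))) x := by
      simpa using ((hasDerivAt_pow 2 x).const_mul (-b)).exp
    exact (h1.mul h2).congr_deriv (by ring)
  have hiF' : Integrable fun x : ℝ =>
      (k + 1 : ℝ) * (x ^ k * Real.exp (-b * x ^ 2))
        - (2 * b) * (x ^ (k + 2) * Real.exp (-b * x ^ 2)) :=
    (hi1.const_mul _).sub (hi2.const_mul _)
  have h0 := integral_eq_zero_of_hasDerivAt_of_integrable hd hiF' (aux_int_pow (k + 1) hb)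
  rw [integral_sub (hi1.const_mul _) (hi2.const_mul _), integral_const_mul,
    integral_const_mul] at h0
  have hb' : (2 * b) ≠ 0 := by positivity
  rw [div_mul_eq_mul_div, eq_div_iff hb']
  linarith [h0]

lemma aux_vne {Δ : ℝ} (hΔ : 0 < Δ) : Real.toNNReal Δ ≠ 0 := by
  simp [Real.toNNReal_eq_zero, not_le, hΔ]

lemma aux_pdf_eq {Δ : ℝ} (hΔ : 0 < Δ) (w : ℝ) :
    gaussianPDFReal 0 (Real.toNNReal Δ) w
      = (Real.sqrt (2 * π * Δ))⁻¹ * Real.exp (-(2 * Δ)⁻¹ * w ^ 2) := by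
  rw [gaussianPDFReal, Real.coe_toNNReal _ hΔ.le]
  congr 1
  rw [sub_zero]
  field_simp

lemma aux_integral_gauss {Δ : ℝ} (hΔ : 0 < Δ) (g : ℝ → ℝ) :
    ∫ w, g w ∂(gaussianReal 0 (Real.toNNReal Δ))
      = ∫ w, gaussianPDFReal 0 (Real.toNNReal Δ) w * g w := by
  rw [gaussianReal_of_var_ne_zero _ (aux_vne hΔ)]
  have hmeas : Measurable fun w => (gaussianPDFReal 0 (Real.toNNReal Δ) w).toNNReal :=
    (measurable_gaussianPDFReal _ _).real_toNNReal
  have hde : volume.withDensity (gaussianPDF 0 (Real.toNNReal Δ))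
      = volume.withDensity
        (fun w => ((gaussianPDFReal 0 (Real.toNNReal Δ) w).toNNReal : ENNReal)) := rfl
  rw [hde, integral_withDensity_eq_integral_smul hmeas]
  congr 1
  ext w
  simp [NNReal.smul_def, Real.coe_toNNReal _ (gaussianPDFReal_nonneg _ _ _)]

lemma aux_integrable_gauss_iff {Δ : ℝ} (hΔ : 0 < Δ) (g : ℝ → ℝ) :
    Integrable g (gaussianReal 0 (Real.toNNReal Δ))
      ↔ Integrable (fun w => gaussianPDFReal 0 (Real.toNNReal Δ) w * g w) := by
  rw [gaussianReal_of_var_ne_zero _ (aux_vne hΔ)]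
  have hmeas : Measurable fun w => (gaussianPDFReal 0 (Real.toNNReal Δ) w).toNNReal :=
    (measurable_gaussianPDFReal _ _).real_toNNReal
  have hde : volume.withDensity (gaussianPDF 0 (Real.toNNReal Δ))
      = volume.withDensity
        (fun w => ((gaussianPDFReal 0 (Real.toNNReal Δ) w).toNNReal : ENNReal)) := rfl
  rw [hde, integrable_withDensity_iff_integrable_smul hmeas]
  constructor <;> intro h <;> refine h.congr (Filter.Eventually.of_forall fun w => ?_) <;>
    simp [NNReal.smul_def, Real.coe_toNNReal _ (gaussianPDFReal_nonneg _ _ _)]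

lemma aux_int_pdf_pow {Δ : ℝ} (hΔ : 0 < Δ) (k : ℕ) :
    Integrable (fun w : ℝ => gaussianPDFReal 0 (Real.toNNReal Δ) w * w ^ k) := by
  have hb : (0:ℝ) < (2 * Δ)⁻¹ := by positivity
  have := ((aux_int_pow k hb).const_mul (Real.sqrt (2 * π * Δ))⁻¹)
  refine this.congr (Filter.Eventually.of_forall fun w => ?_)
  show _ = gaussianPDFReal 0 (Real.toNNReal Δ) w * w ^ k
  rw [aux_pdf_eq hΔ]
  ring

lemma aux_moment_zero {Δ : ℝ} (hΔ : 0 < Δ) :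
    ∫ w : ℝ, gaussianPDFReal 0 (Real.toNNReal Δ) w * w ^ 0 = 1 := by
  simp only [pow_zero, mul_one]
  exact integral_gaussianPDFReal_eq_one 0 (aux_vne hΔ)

lemma aux_moment_rec {Δ : ℝ} (hΔ : 0 < Δ) (k : ℕ) :
    ∫ w : ℝ, gaussianPDFReal 0 (Real.toNNReal Δ) w * w ^ (k + 2)
      = ((k + 1 : ℝ) * Δ) * ∫ w : ℝ, gaussianPDFReal 0 (Real.toNNReal Δ) w * w ^ k := by
  have hb : (0:ℝ) < (2 * Δ)⁻¹ := by positivity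
  set c : ℝ := (Real.sqrt (2 * π * Δ))⁻¹ with hc
  have key : ∀ j : ℕ, ∫ w : ℝ, gaussianPDFReal 0 (Real.toNNReal Δ) w * w ^ j
      = c * ∫ w : ℝ, w ^ j * Real.exp (-(2 * Δ)⁻¹ * w ^ 2) := by
    intro j
    rw [← integral_const_mul]
    congr 1
    ext w
    rw [aux_pdf_eq hΔ]
    ring
  rw [key, key, aux_rec k hb]
  have h2b : (k + 1 : ℝ) / (2 * (2 * Δ)⁻¹) = (k + 1 : ℝ) * Δ := by
    field_simp
  rw [h2b]
  ring

lemma aux_m2 {Δ : ℝ} (hΔ : 0 < Δ) :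
    ∫ w : ℝ, gaussianPDFReal 0 (Real.toNNReal Δ) w * w ^ 2 = Δ := by
  have := aux_moment_rec hΔ 0
  rw [aux_moment_zero hΔ] at this
  simpa using this

lemma aux_m4 {Δ : ℝ} (hΔ : 0 < Δ) :
    ∫ w : ℝ, gaussianPDFReal 0 (Real.toNNReal Δ) w * w ^ 4 = 3 * Δ ^ 2 := by
  have := aux_moment_rec hΔ 2
  rw [aux_m2 hΔ] at this
  rw [show (4:ℕ) = 2 + 2 from rfl, this]
  norm_num
  ring

lemma aux_m6 {Δ : ℝ} (hΔ : 0 < Δ) :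
    ∫ w : ℝ, gaussianPDFReal 0 (Real.toNNReal Δ) w * w ^ 6 = 15 * Δ ^ 3 := by
  have := aux_moment_rec hΔ 4
  rw [aux_m4 hΔ] at this
  rw [show (6:ℕ) = 4 + 2 from rfl, this]
  norm_num
  ring

lemma aux_mvt_pow {v v' : ℝ → ℝ} (hd : ∀ t, HasDerivAt v (v' t) t) (h0 : v 0 = 0)
    {K : ℝ} (hK : 0 ≤ K) {m : ℕ} (hb : ∀ t, |v' t| ≤ K * |t| ^ m) (w : ℝ) :
    |v w| ≤ K * |w| ^ (m + 1) := by
  have habs : ∀ t ∈ Set.uIcc (0:ℝ) w, |t| ≤ |w| := by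
    intro t ht
    rcases Set.mem_uIcc.1 ht with ⟨h1, h2⟩ | ⟨h1, h2⟩ <;>
      [exact abs_le.2 ⟨by linarith [abs_nonneg w], h2.trans (le_abs_self w)⟩;
       exact abs_le.2 ⟨by linarith [neg_abs_le w], by linarith [abs_nonneg w]⟩]
  have := Convex.norm_image_sub_le_of_norm_hasDerivWithin_le
    (f := v) (f' := v') (s := Set.uIcc (0:ℝ) w) (C := K * |w| ^ m)
    (fun t _ => (hd t).hasDerivWithinAt)
    (fun t ht => by
      rw [Real.norm_eq_abs]
      exact (hb t).trans (mul_le_mul_of_nonneg_left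
        (pow_le_pow_left₀ (abs_nonneg t) (habs t ht) m) hK))
    (convex_uIcc 0 w) Set.right_mem_uIcc Set.left_mem_uIcc
  rw [h0] at this
  simp only [zero_sub, norm_neg, Real.norm_eq_abs] at this
  calc |v w| ≤ K * |w| ^ m * |w| := this
    _ = K * |w| ^ (m + 1) := by rw [pow_succ]; ring

lemma aux_taylor (f : ℝ → ℝ) (hf : ContDiff ℝ 5 f) (B : ℝ)
    (hB : ∀ k ≤ 5, ∀ x : ℝ, |iteratedDeriv k f x| ≤ B) (x : ℝ) (w : ℝ) :
    |iteratedDeriv 1 f (x + w) - iteratedDeriv 1 f (x - w)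
      - 2 * iteratedDeriv 2 f x * w - iteratedDeriv 4 f x * w ^ 3 / 3|
      ≤ 2 * B * |w| ^ 4 := by
  have hK : 0 ≤ B := (abs_nonneg _).trans (hB 0 (by norm_num) x)
  have hK2 : 0 ≤ 2 * B := by linarith
  have hder : ∀ k : ℕ, k < 5 → ∀ y : ℝ,
      HasDerivAt (iteratedDeriv k f) (iteratedDeriv (k + 1) f y) y := by
    intro k hk y
    have hdiff : Differentiable ℝ (iteratedDeriv k f) :=
      hf.differentiable_iteratedDeriv k (by exact_mod_cast hk)
    rw [iteratedDeriv_succ]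
    exact (hdiff y).hasDerivAt
  have hplus : ∀ k : ℕ, k < 5 → ∀ t : ℝ,
      HasDerivAt (fun t => iteratedDeriv k f (x + t)) (iteratedDeriv (k + 1) f (x + t)) t := by
    intro k hk t
    have := (hder k hk (x + t)).comp t ((hasDerivAt_id t).const_add x)
    simpa [Function.comp_def] using this
  have hminus : ∀ k : ℕ, k < 5 → ∀ t : ℝ,
      HasDerivAt (fun t => iteratedDeriv k f (x - t)) (-(iteratedDeriv (k + 1) f (x - t))) t := by
    intro k hk t
    have := (hder k hk (x - t)).comp t ((hasDerivAt_id t).const_sub x)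
    simpa [Function.comp_def] using this
  set a : ℝ := iteratedDeriv 2 f x with ha
  set cc : ℝ := iteratedDeriv 4 f x with hcc
  -- level 3
  have he3 : ∀ t : ℝ,
      |iteratedDeriv 4 f (x + t) + iteratedDeriv 4 f (x - t) - 2 * cc| ≤ 2 * B * |t| ^ (0 + 1) := by
    refine aux_mvt_pow (v' := fun t => iteratedDeriv 5 f (x + t) - iteratedDeriv 5 f (x - t))
      (fun t => ?_) (by simp only [add_zero, sub_zero, hcc]; ring) hK2 (fun t => ?_)
    · have h := ((hplus 4 (by norm_num) t).add (hminus 4 (by norm_num) t)).sub_const (2 * cc)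
      exact h.congr_deriv (by ring)
    · simp only [pow_zero, mul_one]
      calc |iteratedDeriv 5 f (x + t) - iteratedDeriv 5 f (x - t)|
          ≤ |iteratedDeriv 5 f (x + t)| + |iteratedDeriv 5 f (x - t)| := abs_sub _ _
        _ ≤ B + B := add_le_add (hB 5 le_rfl _) (hB 5 le_rfl _)
        _ = 2 * B := by ring
  -- level 2
  have he2 : ∀ t : ℝ,
      |iteratedDeriv 3 f (x + t) - iteratedDeriv 3 f (x - t) - 2 * cc * t|
        ≤ 2 * B * |t| ^ (1 + 1) := by
    refine aux_mvt_pow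
      (v' := fun t => iteratedDeriv 4 f (x + t) + iteratedDeriv 4 f (x - t) - 2 * cc)
      (fun t => ?_) (by simp only [add_zero, sub_zero]; ring) hK2 (fun t => by simpa using he3 t)
    have h := (((hplus 3 (by norm_num) t).sub (hminus 3 (by norm_num) t)).sub
      ((hasDerivAt_id t).const_mul (2 * cc)))
    exact h.congr_deriv (by ring)
  -- level 1
  have he1 : ∀ t : ℝ,
      |iteratedDeriv 2 f (x + t) + iteratedDeriv 2 f (x - t) - 2 * a - cc * t ^ 2|
        ≤ 2 * B * |t| ^ (2 + 1) := by
    refine aux_mvt_pow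
      (v' := fun t => iteratedDeriv 3 f (x + t) - iteratedDeriv 3 f (x - t) - 2 * cc * t)
      (fun t => ?_) (by simp only [add_zero, sub_zero, ha, hcc]; ring) hK2 (fun t => by simpa using he2 t)
    have h := (((hplus 2 (by norm_num) t).add (hminus 2 (by norm_num) t)).sub_const (2 * a)).sub
      ((hasDerivAt_pow 2 t).const_mul cc)
    exact h.congr_deriv (by ring)
  -- level 0
  have he0 : ∀ t : ℝ,
      |iteratedDeriv 1 f (x + t) - iteratedDeriv 1 f (x - t) - 2 * a * t - cc * t ^ 3 / 3|
        ≤ 2 * B * |t| ^ (3 + 1) := by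
    refine aux_mvt_pow
      (v' := fun t => iteratedDeriv 2 f (x + t) + iteratedDeriv 2 f (x - t) - 2 * a - cc * t ^ 2)
      (fun t => ?_) (by simp only [add_zero, sub_zero]; ring) hK2 (fun t => by simpa using he1 t)
    have h := ((((hplus 1 (by norm_num) t).sub (hminus 1 (by norm_num) t)).sub
      ((hasDerivAt_id t).const_mul (2 * a))).sub
      (((hasDerivAt_pow 3 t).const_mul cc).div_const 3))
    exact h.congr_deriv (by ring)
  simpa using he0 w

/-- One-dimensional antithetic-variate Monte Carlo approximation of the second
derivative: if `f` is five-times continuously differentiable with bounded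
derivatives and `W_Δ ~ N(0, Δ)`, then the antithetic estimator
`A(Δ) = ½ E[(f'(x+W)−f'(x))W/Δ + (f'(x−W)−f'(x))(−W)/Δ]`
satisfies `|f''(x) − A(Δ)| ≤ C Δ`. -/
theorem stmt1 (f : ℝ → ℝ) (hf : ContDiff ℝ 5 f)
    (B : ℝ) (hB : ∀ k ≤ 5, ∀ x : ℝ, |iteratedDeriv k f x| ≤ B) :
    ∃ C : ℝ, ∀ x : ℝ, ∀ Δ : ℝ, 0 < Δ →
      |deriv (deriv f) x -
        (1/2) * ∫ w, ((deriv f (x + w) - deriv f x) * w / Δ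
                      + (deriv f (x - w) - deriv f x) * (-w) / Δ)
            ∂(gaussianReal 0 (Real.toNNReal Δ))| ≤ C * Δ := by
  have hK : 0 ≤ B := (abs_nonneg _).trans (hB 0 (by norm_num) 0)
  refine ⟨19 * B, fun x Δ hΔ => ?_⟩
  have hΔ0 : Δ ≠ 0 := hΔ.ne'
  have hd1 : iteratedDeriv 1 f = deriv f := iteratedDeriv_one
  have hd2 : deriv (deriv f) = iteratedDeriv 2 f := by
    rw [iteratedDeriv_succ, iteratedDeriv_one]
  set p : ℝ → ℝ := gaussianPDFReal 0 (Real.toNNReal Δ) with hp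
  have hpnn : ∀ w, 0 ≤ p w := fun w => gaussianPDFReal_nonneg _ _ _
  have hpcont : Continuous p := by
    rw [hp, gaussianPDFReal_def]
    fun_prop
  set a : ℝ := iteratedDeriv 2 f x with ha
  set cc : ℝ := iteratedDeriv 4 f x with hcc
  set E : ℝ → ℝ := fun w => iteratedDeriv 1 f (x + w) - iteratedDeriv 1 f (x - w)
      - 2 * a * w - cc * w ^ 3 / 3 with hE
  have hEbound : ∀ w, |E w| ≤ 2 * B * |w| ^ 4 := fun w => aux_taylor f hf B hB x w
  have hEcont : Continuous E := by
    have h1 : Continuous (iteratedDeriv 1 f) := hf.continuous_iteratedDeriv 1 (by norm_num)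
    fun_prop
  set φ : ℝ → ℝ := fun w => (deriv f (x + w) - deriv f x) * w / Δ
      + (deriv f (x - w) - deriv f x) * (-w) / Δ with hφ
  -- rewrite the Gaussian integral with the density
  rw [aux_integral_gauss hΔ φ]
  -- integrability facts
  have hint0 := aux_int_pdf_pow hΔ 0
  have hint2 := aux_int_pdf_pow hΔ 2
  have hint4 := aux_int_pdf_pow hΔ 4
  have hint6 := aux_int_pdf_pow hΔ 6
  have habs5 : ∀ w : ℝ, |w| ^ 5 ≤ w ^ 4 + w ^ 6 := by
    intro w
    have h4 : |w| ^ 4 = w ^ 4 := by rw [← abs_pow, abs_of_nonneg (by positivity)]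
    have h6 : |w| ^ 6 = w ^ 6 := by rw [← abs_pow, abs_of_nonneg (by positivity)]
    nlinarith [mul_nonneg (pow_nonneg (abs_nonneg w) 4) (sq_nonneg (|w| - 1)),
      pow_nonneg (abs_nonneg w) 4, pow_nonneg (abs_nonneg w) 6]
  have hEwbound : ∀ w : ℝ, |E w * w| ≤ 2 * B * (w ^ 4 + w ^ 6) := by
    intro w
    rw [abs_mul]
    calc |E w| * |w| ≤ (2 * B * |w| ^ 4) * |w| :=
          mul_le_mul_of_nonneg_right (hEbound w) (abs_nonneg w)
      _ = 2 * B * |w| ^ 5 := by ring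
      _ ≤ 2 * B * (w ^ 4 + w ^ 6) :=
          mul_le_mul_of_nonneg_left (habs5 w) (by linarith)
  have hintE : Integrable (fun w : ℝ => p w * (E w * w)) := by
    refine ((hint4.add hint6).const_mul (2 * B)).mono'
      ((hpcont.mul (hEcont.mul continuous_id)).aestronglyMeasurable) ?_
    filter_upwards with w
    rw [Real.norm_eq_abs, abs_mul, abs_of_nonneg (hpnn w)]
    calc p w * |E w * w| ≤ p w * (2 * B * (w ^ 4 + w ^ 6)) :=
          mul_le_mul_of_nonneg_left (hEwbound w) (hpnn w)
      _ = 2 * B * (p w * w ^ 4 + p w * w ^ 6) := by ring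
  set S : ℝ := ∫ w, p w * (E w * w) with hS
  have hSbound : |S| ≤ 2 * B * (3 * Δ ^ 2 + 15 * Δ ^ 3) := by
    rw [hS, ← Real.norm_eq_abs]
    have hle : ∀ᵐ w : ℝ, ‖p w * (E w * w)‖ ≤ 2 * B * (p w * w ^ 4 + p w * w ^ 6) := by
      filter_upwards with w
      rw [Real.norm_eq_abs, abs_mul, abs_of_nonneg (hpnn w)]
      calc p w * |E w * w| ≤ p w * (2 * B * (w ^ 4 + w ^ 6)) :=
            mul_le_mul_of_nonneg_left (hEwbound w) (hpnn w)
        _ = 2 * B * (p w * w ^ 4 + p w * w ^ 6) := by ring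
    calc ‖∫ w, p w * (E w * w)‖
        ≤ ∫ w, 2 * B * (p w * w ^ 4 + p w * w ^ 6) :=
          norm_integral_le_of_norm_le ((hint4.add hint6).const_mul (2 * B)) hle
      _ = 2 * B * (3 * Δ ^ 2 + 15 * Δ ^ 3) := by
          rw [integral_const_mul, integral_add hint4 hint6, aux_m4 hΔ, aux_m6 hΔ]
  rcases le_or_gt Δ 1 with hle1 | hgt1
  · -- small Δ : Taylor expansion
    have hEq : (fun w => p w * φ w)
        = fun w => (2 * a / Δ) * (p w * w ^ 2) + (cc / (3 * Δ)) * (p w * w ^ 4)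
            + (1 / Δ) * (p w * (E w * w)) := by
      funext w
      rw [hφ, hE, ha, hcc, ← hd1]
      field_simp
      ring
    have i1 : Integrable (fun w : ℝ => 2 * a / Δ * (p w * w ^ 2)) := hint2.const_mul _
    have i2 : Integrable (fun w : ℝ => cc / (3 * Δ) * (p w * w ^ 4)) := hint4.const_mul _
    have i3 : Integrable (fun w : ℝ => 1 / Δ * (p w * (E w * w))) := hintE.const_mul _
    have i12 : Integrable (fun w : ℝ =>
        2 * a / Δ * (p w * w ^ 2) + cc / (3 * Δ) * (p w * w ^ 4)) := i1.add i2
    have hIeq : ∫ w, p w * φ w = 2 * a + cc * Δ + S / Δ := by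
      rw [hEq, integral_add i12 i3, integral_add i1 i2,
        integral_const_mul, integral_const_mul, integral_const_mul, aux_m2 hΔ, aux_m4 hΔ, ← hS]
      field_simp
    rw [hIeq, hd2, ← ha]
    have hX : a - 1 / 2 * (2 * a + cc * Δ + S / Δ) = -(cc * Δ) / 2 - S / (2 * Δ) := by
      field_simp
      ring
    rw [hX]
    have hccu : cc ≤ B := le_of_abs_le (hB 4 (by norm_num) x)
    have hccl : -B ≤ cc := neg_le_of_abs_le (hB 4 (by norm_num) x)
    have hSu : S ≤ 2 * B * (3 * Δ ^ 2 + 15 * Δ ^ 3) := le_of_abs_le hSbound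
    have hSl : -(2 * B * (3 * Δ ^ 2 + 15 * Δ ^ 3)) ≤ S := neg_le_of_abs_le hSbound
    have hSd : S / (2 * Δ) ≤ 3 * B * Δ + 15 * B * Δ ^ 2 := by
      rw [div_le_iff₀ (by positivity : (0:ℝ) < 2 * Δ)]
      nlinarith [hSu]
    have hSd2 : -(3 * B * Δ + 15 * B * Δ ^ 2) ≤ S / (2 * Δ) := by
      rw [le_div_iff₀ (by positivity : (0:ℝ) < 2 * Δ)]
      nlinarith [hSl]
    have hsq : Δ ^ 2 ≤ Δ := by nlinarith [hΔ.le]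
    have hA3 : 15 * B * Δ ^ 2 ≤ 15 * B * Δ := by nlinarith [hK]
    have hc1 : (-cc) * Δ ≤ B * Δ := mul_le_mul_of_nonneg_right (by linarith) hΔ.le
    have hc2 : (-B) * Δ ≤ (-cc) * Δ := mul_le_mul_of_nonneg_right (by linarith) hΔ.le
    have hBD : 0 ≤ B * Δ := mul_nonneg hK hΔ.le
    rw [abs_le]
    constructor <;> nlinarith [hSd, hSd2, hc1, hc2, hA3, hBD]
  · -- large Δ : trivial bound
    have hφb : ∀ᵐ w : ℝ, ‖p w * φ w‖
        ≤ (2 * B / Δ) * (p w * w ^ 0 + p w * w ^ 2) := by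
      filter_upwards with w
      have hb1 : |deriv f (x + w) - deriv f x| ≤ 2 * B := by
        calc |deriv f (x + w) - deriv f x| ≤ |deriv f (x + w)| + |deriv f x| := abs_sub _ _
          _ ≤ B + B := add_le_add (by rw [← hd1] at *; exact hB 1 (by norm_num) _)
              (by rw [← hd1] at *; exact hB 1 (by norm_num) _)
          _ = 2 * B := by ring
      have hb2 : |deriv f (x - w) - deriv f x| ≤ 2 * B := by
        calc |deriv f (x - w) - deriv f x| ≤ |deriv f (x - w)| + |deriv f x| := abs_sub _ _
          _ ≤ B + B := add_le_add (by rw [← hd1] at *; exact hB 1 (by norm_num) _)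
              (by rw [← hd1] at *; exact hB 1 (by norm_num) _)
          _ = 2 * B := by ring
      have habsw : |w| ≤ (1 + w ^ 2) / 2 := by nlinarith [sq_nonneg (|w| - 1), sq_abs w]
      have hφw : |φ w| ≤ (2 * B / Δ) * (1 + w ^ 2) := by
        rw [hφ]
        calc |(deriv f (x + w) - deriv f x) * w / Δ + (deriv f (x - w) - deriv f x) * (-w) / Δ|
            ≤ |(deriv f (x + w) - deriv f x) * w / Δ|
              + |(deriv f (x - w) - deriv f x) * (-w) / Δ| := abs_add_le _ _
          _ = |deriv f (x + w) - deriv f x| * |w| / Δ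
              + |deriv f (x - w) - deriv f x| * |w| / Δ := by
              rw [abs_div, abs_div, abs_mul, abs_mul, abs_neg, abs_of_pos hΔ]
          _ ≤ 2 * B * |w| / Δ + 2 * B * |w| / Δ := by
              gcongr
          _ = 4 * B * |w| / Δ := by ring
          _ ≤ 4 * B * ((1 + w ^ 2) / 2) / Δ := by gcongr
          _ = (2 * B / Δ) * (1 + w ^ 2) := by field_simp; ring
      rw [Real.norm_eq_abs, abs_mul, abs_of_nonneg (hpnn w)]
      calc p w * |φ w| ≤ p w * ((2 * B / Δ) * (1 + w ^ 2)) :=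
            mul_le_mul_of_nonneg_left hφw (hpnn w)
        _ = (2 * B / Δ) * (p w * w ^ 0 + p w * w ^ 2) := by ring
    have hIb : |∫ w, p w * φ w| ≤ (2 * B / Δ) * (1 + Δ) := by
      rw [← Real.norm_eq_abs]
      calc ‖∫ w, p w * φ w‖ ≤ ∫ w, (2 * B / Δ) * (p w * w ^ 0 + p w * w ^ 2) :=
            norm_integral_le_of_norm_le ((hint0.add hint2).const_mul _) hφb
        _ = (2 * B / Δ) * (1 + Δ) := by
            rw [integral_const_mul, integral_add hint0 hint2, aux_moment_zero hΔ, aux_m2 hΔ]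
    have hI4 : (2 * B / Δ) * (1 + Δ) ≤ 4 * B := by
      rw [div_mul_eq_mul_div, div_le_iff₀ hΔ]
      nlinarith [hK]
    have haB : |deriv (deriv f) x| ≤ B := by rw [hd2]; exact hB 2 (by norm_num) x
    have hIu := le_of_abs_le hIb
    have hIl := neg_le_of_abs_le hIb
    have hau := le_of_abs_le haB
    have hal := neg_le_of_abs_le haB
    rw [abs_le]
    constructor <;> nlinarith [hIu, hIl, hau, hal, hI4, hK, hΔ.le]
end
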